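/- Every finite folding curve is self-avoiding: a lattice path in ℤ² whose turn sequence is a finite folding sequence visits no unit edge of ℤ² twice and crosses itself nowhere (i.e., the associated sequence of unit edges are pairwise distinct and any two non-consecutive edges are disjoint as closed segments, except for the rounded-corner interpretation at shared lattice points where the curve does not actually touch itself). -/

import Mathlib

/-- Reversal-with-negation of a finite ±1 word. -/
def negRev (S : List ℤ) : List ℤ := (S.map (fun x => -x)).reverse

/-- `IsFold n S` : `S` is an `n`-folding sequence. -/
inductive IsFold : ℕ → List ℤ → Prop
  | zero : IsFold 0 []
  | succ (n : ℕ) (S : List ℤ) (ε : ℤ) : IsFold n S → (ε = 1 ∨ ε = -1) →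
      IsFold (n + 1) (negRev S ++ ε :: S)

/-- The subword `(a (h+1), …, a (h+t))` of a bi-infinite sequence. -/
def subwordAt (a : ℤ → ℤ) (h : ℤ) (t : ℕ) : List ℤ :=
  (List.range t).map fun i => a (h + 1 + (i : ℤ))

/-- `T` is a finite subword of the bi-infinite sequence `a`. -/
def IsSubword (a : ℤ → ℤ) (T : List ℤ) : Prop := ∃ h : ℤ, T = subwordAt a h T.length

/-- A finite folding sequence: a subword of some `n`-folding sequence. -/
def IsFiniteFold (T : List ℤ) : Prop := ∃ n S, IsFold n S ∧ T <:+: S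

/-- The sequence takes values in `{+1, -1}`. -/
def PM (a : ℤ → ℤ) : Prop := ∀ h : ℤ, a h = 1 ∨ a h = -1

/-- `a (hn + k·2^(n+1)) = (-1)^k · a hn` for all `k`. -/
def AltProp (a : ℤ → ℤ) (n : ℕ) (hn : ℤ) : Prop :=
  ∀ k : ℤ, a (hn + k * 2 ^ (n + 1)) = if Even k then a hn else -a hn

/-- A complete folding sequence (alternation characterization). -/
def CompleteFold (a : ℤ → ℤ) : Prop := PM a ∧ ∀ n : ℕ, ∃ hn : ℤ, AltProp a n hn

/-- Rotate a direction left (`η = 1`) or right (otherwise). -/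
def rot (d : ℤ × ℤ) (η : ℤ) : ℤ × ℤ := if η = 1 then (-d.2, d.1) else (d.2, -d.1)

/-- Unit lattice direction. -/
def IsUnitVec (d : ℤ × ℤ) : Prop := d = (1, 0) ∨ d = (0, 1) ∨ d = (-1, 0) ∨ d = (0, -1)

/-- Direction of the `i`-th step of the curve with turn word `η`. -/
def dirAt (d0 : ℤ × ℤ) (η : List ℤ) (i : ℕ) : ℤ × ℤ := (η.take i).foldl rot d0

/-- `i`-th vertex of the curve started at `X0` with initial direction `d0`. -/
def vertexAt (X0 d0 : ℤ × ℤ) (η : List ℤ) (i : ℕ) : ℤ × ℤ :=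
  X0 + ∑ j ∈ Finset.range i, dirAt d0 η j

/-- `i`-th (unordered) unit edge of the curve. -/
def edgeAt (X0 d0 : ℤ × ℤ) (η : List ℤ) (i : ℕ) : Sym2 (ℤ × ℤ) :=
  s(vertexAt X0 d0 η i, vertexAt X0 d0 η (i + 1))

/-- A complete folding curve, given by its vertex function. -/
def IsCFCurve (V : ℤ → ℤ × ℤ) : Prop :=
  (∀ i : ℤ, IsUnitVec (V (i + 1) - V i)) ∧
  ∃ η : ℤ → ℤ, CompleteFold η ∧ ∀ i : ℤ, V (i + 2) - V (i + 1) = rot (V (i + 1) - V i) (η i)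

/-- Two bi-infinite curves are disjoint: no common unit edge, and at every common
lattice point the four incident traversed edges point in four distinct directions
(the curves do not cross). -/
def CurvesDisjoint (V W : ℤ → ℤ × ℤ) : Prop :=
  (∀ i j : ℤ, s(V i, V (i + 1)) ≠ s(W j, W (j + 1))) ∧
  ∀ i j : ℤ, V i = W j →
    List.Pairwise (· ≠ ·) [V (i - 1) - V i, V (i + 1) - V i, W (j - 1) - W j, W (j + 1) - W j]

/-!
Self-avoidance is proved in the stronger form that distinct edges have distinct midpoints, for
the curve of every `n`-folding sequence, by induction on `n`. It passes to finite folding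
sequences, since the curve of a subword is a translated piece of the curve of the whole word
for a suitable initial direction.

An `(n+1)`-folding sequence is `c, s₁, -c, s₂, c, …` with `s` an `n`-folding sequence. Grouping
the steps of its curve in pairs, the pair endpoints `W k` trace the curve of `s` in the diagonal
lattice, each pair going around the unit square it crosses on a side that alternates with the
parity of `k`. An edge midpoint determines the endpoint `P = W a` of the edge among the pair
endpoints (one colour class of the checkerboard) and the direction of the edge from `P`. The parity
of `a` is the colour of `P` in the diagonal lattice, so this also determines the diagonal from `P`,
hence the pair by induction, and finally the edge. At a vertex visited twice the two passes cannot
cross, because the curve turns at every vertex.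
-/

lemma mul_neg_one_pow_eq_or {c : ℤ} (hc : c = 1 ∨ c = -1) (k : ℕ) :
    c * (-1) ^ k = 1 ∨ c * (-1) ^ k = -1 := by
  rcases hc with rfl | rfl <;> rcases neg_one_pow_eq_or ℤ k with h | h <;> simp [h]

section Rotation

variable (x y : ℤ × ℤ) (a b : ℤ)

lemma rot_add : rot (x + y) a = rot x a + rot y a := by
  unfold rot
  split_ifs <;> simp only [Prod.fst_add, Prod.snd_add, neg_add, Prod.mk_add_mk]

lemma rot_neg : rot (-x) a = -rot x a := by
  by_cases h : a = 1 <;> simp [rot, h]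

lemma rot_zero : rot 0 a = 0 := by
  by_cases h : a = 1 <;> simp [rot, h]

lemma rot_comm : rot (rot x a) b = rot (rot x b) a := by
  by_cases ha : a = 1 <;> by_cases hb : b = 1 <;> simp [rot, ha, hb]

lemma rot_rot_self : rot (rot x a) a = -x := by
  by_cases h : a = 1 <;> simp [rot, h, Prod.ext_iff]

variable {a} in
lemma rot_neg_sign (ha : a = 1 ∨ a = -1) : rot x (-a) = -rot x a := by
  rcases ha with rfl | rfl <;> norm_num [rot]

lemma add_rot_injective : Function.Injective fun x => x + rot x a := by
  intro x y h
  by_cases ha : a = 1 <;>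
    simp only [rot, ha, ↓reduceIte, Prod.ext_iff, Prod.fst_add, Prod.snd_add] at h ⊢ <;> omega

variable {a} in
lemma rot_pair (ha : a = 1 ∨ a = -1) :
    rot (rot x a) b + rot (rot (rot x a) b) (-a) = rot (x + rot x a) b := by
  rw [rot_neg_sign _ ha, rot_comm (rot x a), rot_rot_self, rot_neg, neg_neg, rot_add, add_comm]

end Rotation

section UnitVec

variable {d e : ℤ × ℤ}

lemma isUnitVec_rot (hd : IsUnitVec d) (a : ℤ) : IsUnitVec (rot d a) := by
  by_cases ha : a = 1 <;> rcases hd with rfl | rfl | rfl | rfl <;> simp [rot, ha, IsUnitVec]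

lemma isUnitVec_neg (hd : IsUnitVec d) : IsUnitVec (-d) := by
  rcases hd with rfl | rfl | rfl | rfl <;> simp [IsUnitVec]

lemma isUnitVec_foldl_rot (hd : IsUnitVec d) (L : List ℤ) : IsUnitVec (L.foldl rot d) := by
  induction L generalizing d with
  | nil => exact hd
  | cons a L ih => exact ih (isUnitVec_rot hd a)

lemma IsUnitVec.coords (hd : IsUnitVec d) :
    d.1 = 0 ∧ (d.2 = 1 ∨ d.2 = -1) ∨ d.2 = 0 ∧ (d.1 = 1 ∨ d.1 = -1) := by
  rcases hd with rfl | rfl | rfl | rfl <;> simp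

lemma IsUnitVec.ne_zero (hd : IsUnitVec d) : d ≠ 0 := by
  rcases hd with rfl | rfl | rfl | rfl <;> decide

/-- A unit edge has one endpoint in each colour class of the checkerboard colouring of `ℤ²`, so
its midpoint determines the endpoint in a given class and the direction leaving it. -/
lemma eq_of_two_nsmul_add_eq {P Q : ℤ × ℤ} (hd : IsUnitVec d) (he : IsUnitVec e)
    (hPQ : (P.1 + P.2) % 2 = (Q.1 + Q.2) % 2) (h : 2 • P + d = 2 • Q + e) : P = Q ∧ d = e := by
  rw [two_nsmul, two_nsmul] at h
  have h1 := congrArg Prod.fst h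
  have h2 := congrArg Prod.snd h
  simp only [Prod.fst_add, Prod.snd_add] at h1 h2
  have := hd.coords
  have := he.coords
  rw [Prod.ext_iff, Prod.ext_iff]
  omega

lemma exists_foldl_rot_eq (L : List ℤ) (he : IsUnitVec e) :
    ∃ d, IsUnitVec d ∧ L.foldl rot d = e := by
  induction L generalizing e with
  | nil => exact ⟨e, he, rfl⟩
  | cons a L ih =>
    obtain ⟨d, hd, rfl⟩ := ih he
    exact ⟨-rot d a, isUnitVec_neg (isUnitVec_rot hd a), by simp [rot_neg, rot_rot_self]⟩

end UnitVec

section Curve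

variable (X0 d0 : ℤ × ℤ) (η : List ℤ)

/-- Twice the midpoint of the `i`-th edge. -/
def edgeSum (i : ℕ) : ℤ × ℤ := vertexAt X0 d0 η i + vertexAt X0 d0 η (i + 1)

@[simp] lemma dirAt_zero : dirAt d0 η 0 = d0 := rfl

@[simp] lemma vertexAt_zero : vertexAt X0 d0 η 0 = X0 := by simp [vertexAt]

lemma dirAt_succ {i : ℕ} (hi : i < η.length) :
    dirAt d0 η (i + 1) = rot (dirAt d0 η i) (η.getD i 0) := by
  rw [dirAt, dirAt, List.take_add_one, List.foldl_append, List.getElem?_eq_getElem hi,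
    List.getD_eq_getElem _ _ hi]
  rfl

lemma vertexAt_succ (i : ℕ) : vertexAt X0 d0 η (i + 1) = vertexAt X0 d0 η i + dirAt d0 η i := by
  rw [vertexAt, vertexAt, Finset.sum_range_succ, add_assoc]

lemma vertexAt_add_two (i : ℕ) :
    vertexAt X0 d0 η (i + 2) = vertexAt X0 d0 η i + dirAt d0 η i + dirAt d0 η (i + 1) := by
  rw [vertexAt_succ, vertexAt_succ]

lemma edgeSum_sub_two_nsmul_vertexAt (i : ℕ) :
    edgeSum X0 d0 η i - 2 • vertexAt X0 d0 η i = dirAt d0 η i := by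
  rw [edgeSum, vertexAt_succ, two_nsmul]
  abel

lemma edgeSum_sub_two_nsmul_vertexAt_succ (i : ℕ) :
    edgeSum X0 d0 η i - 2 • vertexAt X0 d0 η (i + 1) = -dirAt d0 η i := by
  rw [edgeSum, vertexAt_succ, two_nsmul]
  abel

variable {X0 d0} (hd0 : IsUnitVec d0)
include hd0

lemma isUnitVec_dirAt (i : ℕ) : IsUnitVec (dirAt d0 η i) := isUnitVec_foldl_rot hd0 _

lemma vertexAt_succ_ne (i : ℕ) : vertexAt X0 d0 η (i + 1) ≠ vertexAt X0 d0 η i := by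
  rw [vertexAt_succ, Ne, add_eq_left]
  exact (isUnitVec_dirAt η hd0 i).ne_zero

lemma vertexAt_coord_sum_emod_two (i : ℕ) :
    ((vertexAt X0 d0 η i).1 + (vertexAt X0 d0 η i).2 + i) % 2 = (X0.1 + X0.2) % 2 := by
  induction i with
  | zero => simp
  | succ i ih =>
    have := (isUnitVec_dirAt η hd0 i).coords
    rw [vertexAt_succ, Prod.fst_add, Prod.snd_add]
    push_cast
    omega

end Curve

section Sublist

variable (X0 d0 : ℤ × ℤ) {A T : List ℤ} {i : ℕ}

lemma dirAt_append_of_le (hi : i ≤ A.length) : dirAt d0 (A ++ T) i = dirAt d0 A i := by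
  rw [dirAt, dirAt, List.take_append_of_le_length hi]

lemma dirAt_append_add (i : ℕ) : dirAt d0 (A ++ T) (A.length + i) = dirAt (A.foldl rot d0) T i := by
  rw [dirAt, dirAt, List.take_length_add_append, List.foldl_append]

lemma vertexAt_append_of_le (hi : i ≤ A.length + 1) :
    vertexAt X0 d0 (A ++ T) i = vertexAt X0 d0 A i := by
  rw [vertexAt, vertexAt]
  congr 1
  refine Finset.sum_congr rfl fun j hj => dirAt_append_of_le d0 ?_
  rw [Finset.mem_range] at hj
  omega

lemma vertexAt_append_add (i : ℕ) : vertexAt X0 d0 (A ++ T) (A.length + i) =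
    vertexAt (vertexAt X0 d0 A A.length) (A.foldl rot d0) T i := by
  rw [vertexAt, Finset.sum_range_add, ← add_assoc, ← vertexAt, vertexAt_append_of_le _ _ (by omega)]
  simp only [dirAt_append_add]
  rfl

lemma edgeSum_append_of_le (hi : i ≤ A.length) :
    edgeSum X0 d0 (A ++ T) i = edgeSum X0 d0 A i := by
  rw [edgeSum, edgeSum, vertexAt_append_of_le _ _ (by omega), vertexAt_append_of_le _ _ (by omega)]

lemma edgeSum_append_add (i : ℕ) : edgeSum X0 d0 (A ++ T) (A.length + i) =
    edgeSum (vertexAt X0 d0 A A.length) (A.foldl rot d0) T i := by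
  rw [edgeSum, edgeSum, vertexAt_append_add, add_assoc, vertexAt_append_add]

end Sublist

def EdgeSumInjective (η : List ℤ) : Prop :=
  ∀ X0 d0 : ℤ × ℤ, IsUnitVec d0 → Set.InjOn (edgeSum X0 d0 η) (Set.Iic η.length)

theorem EdgeSumInjective.of_isInfix {S T : List ℤ} (hS : EdgeSumInjective S) (hT : T <:+: S) :
    EdgeSumInjective T := by
  obtain ⟨A, B, rfl⟩ := hT
  intro X0 d0 hd0 i hi j hj hij
  rw [Set.mem_Iic] at hi hj
  obtain ⟨d, hd, rfl⟩ := exists_foldl_rot_eq A hd0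
  have hX : vertexAt (X0 - vertexAt 0 d A A.length) d A A.length = X0 := by simp [vertexAt]
  have hshift : ∀ k ≤ T.length,
      edgeSum (X0 - vertexAt 0 d A A.length) d (A ++ T ++ B) (A.length + k) =
        edgeSum X0 (A.foldl rot d) T k := fun k hk => by
    rw [edgeSum_append_of_le _ _ (by rw [List.length_append]; omega), edgeSum_append_add, hX]
  have hlen : (A ++ T ++ B).length = A.length + T.length + B.length := by
    simp only [List.length_append]
  have := hS _ d hd (Set.mem_Iic.mpr (by omega)) (Set.mem_Iic.mpr (by omega))
    ((hshift i hi).trans (hij.trans (hshift j hj).symm))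
  omega

section Interleave

def interleave : ℤ → List ℤ → List ℤ
  | c, [] => [c]
  | c, x :: xs => c :: x :: interleave (-c) xs

lemma length_negRev (S : List ℤ) : (negRev S).length = S.length := by simp [negRev]

lemma negRev_cons (a : ℤ) (S : List ℤ) : negRev (a :: S) = negRev S ++ [-a] := by simp [negRev]

lemma length_interleave (c : ℤ) (S : List ℤ) : (interleave c S).length = 2 * S.length + 1 := by
  induction S generalizing c with
  | nil => rfl
  | cons x S ih =>
    simp only [interleave, List.length_cons, ih]
    ring

lemma interleave_append (c x : ℤ) (A B : List ℤ) :
    interleave c (A ++ x :: B) =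
      interleave c A ++ x :: interleave (c * (-1) ^ (A.length + 1)) B := by
  induction A generalizing c with
  | nil => simp [interleave]
  | cons a A ih =>
    simp only [List.cons_append, interleave, ih, List.length_cons]
    rw [pow_succ _ (A.length + 1), mul_neg_one, mul_neg, neg_mul]

lemma negRev_interleave (c : ℤ) (S : List ℤ) :
    negRev (interleave c S) = interleave (-c * (-1) ^ S.length) (negRev S) := by
  induction S generalizing c with
  | nil => simp [interleave, negRev]
  | cons x S ih =>
    have hsq : ((-1 : ℤ) ^ (S.length + 1)) * (-1) ^ (S.length + 1) = 1 := by
      rw [← mul_pow]; simp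
    rw [interleave, negRev_cons, negRev_cons, ih, negRev_cons, interleave_append, length_negRev]
    simp only [List.length_cons, List.append_assoc, List.singleton_append, interleave]
    rw [show -c * (-1) ^ (S.length + 1) * (-1) ^ (S.length + 1) = -c by
        linear_combination (-c) * hsq,
      show - -c * (-1) ^ S.length = -c * (-1) ^ (S.length + 1) by ring]

lemma getD_interleave_two_mul {c : ℤ} {S : List ℤ} {k : ℕ} (hk : k ≤ S.length) :
    (interleave c S).getD (2 * k) 0 = c * (-1) ^ k := by
  induction S generalizing c k with
  | nil =>
    obtain rfl : k = 0 := by simpa using hk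
    simp [interleave]
  | cons x S ih =>
    cases k with
    | zero => simp [interleave]
    | succ k =>
      rw [interleave, show 2 * (k + 1) = 2 * k + 1 + 1 by ring]
      simp only [List.getD_cons_succ]
      rw [ih (by simpa using hk), pow_succ]
      ring

lemma getD_interleave_two_mul_add_one (c : ℤ) (S : List ℤ) (k : ℕ) :
    (interleave c S).getD (2 * k + 1) 0 = S.getD k 0 := by
  induction S generalizing c k with
  | nil => simp [interleave]
  | cons x S ih =>
    cases k with
    | zero => simp [interleave]
    | succ k =>
      rw [interleave, show 2 * (k + 1) + 1 = 2 * k + 1 + 1 + 1 by ring]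
      simp only [List.getD_cons_succ, ih]

lemma IsFold.eq_nil {S : List ℤ} (h : IsFold 0 S) : S = [] := by
  cases h
  rfl

theorem IsFold.exists_interleave {n : ℕ} {W : List ℤ} (h : IsFold (n + 1) W) :
    ∃ c S, (c = 1 ∨ c = -1) ∧ IsFold n S ∧ W = interleave c S := by
  induction n generalizing W with
  | zero =>
    cases h with | succ _ S ε hS hε =>
    obtain rfl := hS.eq_nil
    exact ⟨ε, [], hε, .zero, rfl⟩
  | succ n ih =>
    cases h with | succ _ T ε hT hε =>
    obtain ⟨c, S, hc, hS, rfl⟩ := ih hT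
    refine ⟨-c * (-1) ^ S.length, negRev S ++ ε :: S, ?_, hS.succ _ _ _ hε, ?_⟩
    · rcases hc with rfl | rfl <;> rcases neg_one_pow_eq_or ℤ S.length with h | h <;> simp [h]
    · have hsq : ((-1 : ℤ) ^ S.length) * (-1) ^ S.length = 1 := by rw [← mul_pow]; simp
      rw [interleave_append, negRev_interleave, length_negRev,
        show -c * (-1) ^ S.length * (-1) ^ (S.length + 1) = c by linear_combination c * hsq]

end Interleave

section Renormalization

variable {c : ℤ} {S : List ℤ} (X0 : ℤ × ℤ) {d0 : ℤ × ℤ}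

lemma dirAt_interleave_two_mul_add_one {k : ℕ} (hk : k ≤ S.length) :
    dirAt d0 (interleave c S) (2 * k + 1) =
      rot (dirAt d0 (interleave c S) (2 * k)) (c * (-1) ^ k) := by
  rw [dirAt_succ _ _ (by rw [length_interleave]; omega), getD_interleave_two_mul hk]

lemma dirAt_interleave_two_mul_add_two {k : ℕ} (hk : k < S.length) :
    dirAt d0 (interleave c S) (2 * k + 2) =
      rot (dirAt d0 (interleave c S) (2 * k + 1)) (S.getD k 0) := by
  rw [dirAt_succ _ _ (by rw [length_interleave]; omega), getD_interleave_two_mul_add_one]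

variable (hc : c = 1 ∨ c = -1)
include hc

lemma dirAt_interleave_pair {k : ℕ} (hk : k ≤ S.length) :
    dirAt d0 (interleave c S) (2 * k) + dirAt d0 (interleave c S) (2 * k + 1) =
      dirAt d0 S k + rot (dirAt d0 S k) c := by
  induction k with
  | zero => simpa using dirAt_interleave_two_mul_add_one (c := c) (d0 := d0) hk
  | succ k ih =>
    have hk' : k < S.length := hk
    rw [dirAt_interleave_two_mul_add_one hk, show 2 * (k + 1) = 2 * k + 2 by ring,
      dirAt_interleave_two_mul_add_two hk', dirAt_interleave_two_mul_add_one hk'.le,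
      show c * (-1) ^ (k + 1) = -(c * (-1) ^ k) by ring, rot_pair _ _ (mul_neg_one_pow_eq_or hc k),
      ← dirAt_interleave_two_mul_add_one hk'.le, ih hk'.le, dirAt_succ _ _ hk', rot_add, rot_comm]

lemma vertexAt_interleave_two_mul {k : ℕ} (hk : k ≤ S.length + 1) :
    vertexAt X0 d0 (interleave c S) (2 * k) =
      X0 + (vertexAt 0 d0 S k + rot (vertexAt 0 d0 S k) c) := by
  induction k with
  | zero => simp [rot_zero]
  | succ k ih =>
    rw [show 2 * (k + 1) = 2 * k + 2 by ring, vertexAt_add_two, add_assoc,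
      dirAt_interleave_pair hc (by omega), ih (by omega), vertexAt_succ, rot_add]
    abel

lemma emod_two_eq_of_vertexAt_interleave_eq (hd0 : IsUnitVec d0) {k l : ℕ}
    (hk : k ≤ S.length + 1) (hl : l ≤ S.length + 1)
    (h : vertexAt X0 d0 (interleave c S) (2 * k) = vertexAt X0 d0 (interleave c S) (2 * l)) :
    k % 2 = l % 2 := by
  rw [vertexAt_interleave_two_mul X0 hc hk, vertexAt_interleave_two_mul X0 hc hl] at h
  have hkl := add_rot_injective c (add_left_cancel h)
  have hk2 := vertexAt_coord_sum_emod_two S hd0 (X0 := 0) k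
  have hl2 := vertexAt_coord_sum_emod_two S hd0 (X0 := 0) l
  rw [hkl] at hk2
  simp only [Prod.fst_zero, Prod.snd_zero] at hk2 hl2
  omega

lemma eq_of_vertexAt_interleave_add_eq (hS : EdgeSumInjective S) (hd0 : IsUnitVec d0) {k l : ℕ}
    (hk : k ≤ S.length) (hl : l ≤ S.length)
    (h : vertexAt X0 d0 (interleave c S) (2 * k) + vertexAt X0 d0 (interleave c S) (2 * (k + 1)) =
      vertexAt X0 d0 (interleave c S) (2 * l) + vertexAt X0 d0 (interleave c S) (2 * (l + 1))) :
    k = l := by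
  rw [vertexAt_interleave_two_mul X0 hc (k := k) (by omega),
    vertexAt_interleave_two_mul X0 hc (k := k + 1) (by omega),
    vertexAt_interleave_two_mul X0 hc (k := l) (by omega),
    vertexAt_interleave_two_mul X0 hc (k := l + 1) (by omega)] at h
  refine hS 0 d0 hd0 hk hl (add_rot_injective c ?_)
  simp only [edgeSum, rot_add]
  linear_combination h

/-- With `W k = vertexAt X0 d0 (interleave c S) (2 * k)`: the `s`-th edge leaves `W a`,
`a = ⌈s / 2⌉`, in a unit direction `e`, and the diagonal from `W (s / 2)` to `W (s / 2 + 1)` of its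
pair leaves `W a` in direction `e + rot e (c * (-1) ^ a)`. -/
lemma edgeSum_interleave (hd0 : IsUnitVec d0) {s : ℕ} (hs : s ≤ 2 * S.length + 1) :
    ∃ e, IsUnitVec e ∧
      edgeSum X0 d0 (interleave c S) s =
        2 • vertexAt X0 d0 (interleave c S) (2 * ((s + 1) / 2)) + e ∧
      vertexAt X0 d0 (interleave c S) (2 * (s / 2)) +
          vertexAt X0 d0 (interleave c S) (2 * (s / 2 + 1)) =
        2 • vertexAt X0 d0 (interleave c S) (2 * ((s + 1) / 2)) + e +
          rot e (c * (-1) ^ ((s + 1) / 2)) := by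
  obtain ⟨k, rfl | rfl⟩ := Nat.even_or_odd' s
  · rw [show (2 * k + 1) / 2 = k by omega, show 2 * k / 2 = k by omega,
      show 2 * (k + 1) = 2 * k + 2 by ring]
    refine ⟨_, isUnitVec_dirAt _ hd0 _,
      sub_eq_iff_eq_add'.mp (edgeSum_sub_two_nsmul_vertexAt ..), ?_⟩
    rw [vertexAt_add_two, ← dirAt_interleave_two_mul_add_one (by omega), two_nsmul]
    abel
  · rw [show (2 * k + 1 + 1) / 2 = k + 1 by omega, show (2 * k + 1) / 2 = k by omega,
      show 2 * (k + 1) = 2 * k + 1 + 1 by ring]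
    refine ⟨_, isUnitVec_neg (isUnitVec_dirAt _ hd0 _),
      sub_eq_iff_eq_add'.mp (edgeSum_sub_two_nsmul_vertexAt_succ ..), ?_⟩
    rw [show c * (-1) ^ (k + 1) = -(c * (-1) ^ k) by ring, rot_neg,
      rot_neg_sign _ (mul_neg_one_pow_eq_or hc k), neg_neg,
      dirAt_interleave_two_mul_add_one (by omega), rot_rot_self, vertexAt_add_two,
      ← dirAt_interleave_two_mul_add_one (by omega), two_nsmul]
    abel

theorem edgeSumInjective_interleave (hS : EdgeSumInjective S) :
    EdgeSumInjective (interleave c S) := by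
  intro X0 d0 hd0 s hs t ht hst
  simp only [Set.mem_Iic, length_interleave] at hs ht
  obtain ⟨e, he, hs_eq, hWs⟩ := edgeSum_interleave X0 hc hd0 hs
  obtain ⟨f, hf, ht_eq, hWt⟩ := edgeSum_interleave X0 hc hd0 ht
  have hclass : ∀ a, ((vertexAt X0 d0 (interleave c S) (2 * a)).1 +
      (vertexAt X0 d0 (interleave c S) (2 * a)).2) % 2 = (X0.1 + X0.2) % 2 := fun a => by
    have := vertexAt_coord_sum_emod_two (interleave c S) hd0 (X0 := X0) (2 * a)
    push_cast at this
    omega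
  obtain ⟨hP, rfl⟩ := eq_of_two_nsmul_add_eq he hf (by rw [hclass, hclass])
    (hs_eq.symm.trans (hst.trans ht_eq))
  have hpar := emod_two_eq_of_vertexAt_interleave_eq X0 hc hd0 (by omega) (by omega) hP
  have hsign : (-1 : ℤ) ^ ((s + 1) / 2) = (-1) ^ ((t + 1) / 2) := by
    rw [neg_one_pow_eq_pow_mod_two, hpar, ← neg_one_pow_eq_pow_mod_two]
  have hpair := eq_of_vertexAt_interleave_add_eq X0 hc hS hd0 (k := s / 2) (l := t / 2)
    (by omega) (by omega) (by rw [hWs, hWt, hP, hsign])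
  omega

end Renormalization

theorem IsFold.edgeSumInjective {n : ℕ} {S : List ℤ} (h : IsFold n S) : EdgeSumInjective S := by
  induction n generalizing S with
  | zero =>
    obtain rfl := h.eq_nil
    intro X0 d0 _ i hi j hj _
    simp only [Set.mem_Iic, List.length_nil, Nat.le_zero] at hi hj
    rw [hi, hj]
  | succ n ih =>
    obtain ⟨c, S, hc, hS, rfl⟩ := h.exists_interleave
    exact edgeSumInjective_interleave hc (ih hS)

section SelfAvoiding

variable {X0 d0 : ℤ × ℤ} {η : List ℤ}

lemma edgeSum_eq_of_edgeAt_eq {i j : ℕ} (h : edgeAt X0 d0 η i = edgeAt X0 d0 η j) :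
    edgeSum X0 d0 η i = edgeSum X0 d0 η j := by
  rcases Sym2.eq_iff.mp h with ⟨h1, h2⟩ | ⟨h1, h2⟩ <;> simp only [edgeSum, h1, h2, add_comm]

/-- The curve turns at every vertex, so two passes through a vertex use four distinct edges
there as soon as all edges are distinct. -/
theorem pairwise_ne_of_vertexAt_eq (hd0 : IsUnitVec d0)
    (hinj : Set.InjOn (edgeSum X0 d0 η) (Set.Iic η.length)) {k l : ℕ} (hk : 1 ≤ k)
    (hkη : k ≤ η.length) (hl : 1 ≤ l) (hlη : l ≤ η.length) (hkl : k ≠ l)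
    (heq : vertexAt X0 d0 η k = vertexAt X0 d0 η l) :
    List.Pairwise (· ≠ ·)
      [-(dirAt d0 η (k - 1)), dirAt d0 η k, -(dirAt d0 η (l - 1)), dirAt d0 η l] := by
  obtain ⟨k, rfl⟩ := Nat.exists_eq_add_of_le' hk
  obtain ⟨l, rfl⟩ := Nat.exists_eq_add_of_le' hl
  have hkl' : k ≠ l + 1 := fun h => vertexAt_succ_ne η hd0 k (by rw [heq, h])
  have hlk' : l ≠ k + 1 := fun h => vertexAt_succ_ne η hd0 l (by rw [← heq, h])
  have hlist : [-(dirAt d0 η (k + 1 - 1)), dirAt d0 η (k + 1), -(dirAt d0 η (l + 1 - 1)),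
      dirAt d0 η (l + 1)] = [k, k + 1, l, l + 1].map
        fun t => edgeSum X0 d0 η t - 2 • vertexAt X0 d0 η (k + 1) := by
    rw [Nat.add_sub_cancel, Nat.add_sub_cancel]
    simp only [List.map_cons, List.map_nil]
    rw [edgeSum_sub_two_nsmul_vertexAt_succ, edgeSum_sub_two_nsmul_vertexAt, heq,
      edgeSum_sub_two_nsmul_vertexAt_succ, edgeSum_sub_two_nsmul_vertexAt]
  rw [hlist, List.pairwise_map]
  have hidx : List.Pairwise (· ≠ ·) [k, k + 1, l, l + 1] := by
    simp only [List.pairwise_cons, List.mem_cons, List.not_mem_nil, or_false, forall_eq_or_imp,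
      forall_eq, false_implies, implies_true, List.Pairwise.nil, and_true]
    omega
  refine hidx.imp_of_mem fun ha hb hab h => hab (hinj ?_ ?_ (sub_left_inj.mp h)) <;>
    simp only [List.mem_cons, List.not_mem_nil, or_false, Set.mem_Iic] at ha hb ⊢ <;> omega

end SelfAvoiding

theorem statement17 (η : List ℤ) (hη : IsFiniteFold η) (X0 d0 : ℤ × ℤ)
    (hd : IsUnitVec d0) :
    (∀ i j : ℕ, i ≤ η.length → j ≤ η.length → i ≠ j →
        edgeAt X0 d0 η i ≠ edgeAt X0 d0 η j) ∧
    ∀ k l : ℕ, 1 ≤ k → k ≤ η.length → 1 ≤ l → l ≤ η.length → k ≠ l →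
      vertexAt X0 d0 η k = vertexAt X0 d0 η l →
      List.Pairwise (· ≠ ·)
        [-(dirAt d0 η (k - 1)), dirAt d0 η k, -(dirAt d0 η (l - 1)), dirAt d0 η l] := by
  obtain ⟨n, S, hS, hηS⟩ := hη
  have hinj := hS.edgeSumInjective.of_isInfix hηS X0 d0 hd
  exact ⟨fun i j hi hj hij h => hij (hinj hi hj (edgeSum_eq_of_edgeAt_eq h)),
    fun k l hk hkη hl hlη hkl heq => pairwise_ne_of_vertexAt_eq hd hinj hk hkη hl hlη hkl heq⟩
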